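/- arXiv:2002.12129 — 11 statements merged into one kernel-verified Lean document; each statement's English description precedes it below -/
import Mathlib

section
/- Let G := E - K ∘ C ∘ g' ∘ B ∘ r ∘ E (the boundary-integral representation of the Green function built from the fundamental solution). Then (i) L ∘ G = id (G is a fundamental solution of the operator L), and (ii) B ∘ r ∘ G = 0 (G satisfies the homogeneous nonlocal boundary conditions). -/
/-- Abstract operator model of a linear boundary value problem:
`G := E - K ∘ C ∘ g' ∘ B ∘ r ∘ E` is a fundamental solution of `L`
satisfying the homogeneous nonlocal boundary conditions `B ∘ r ∘ G = 0`. -/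
theorem green_function_representation
    (V S W Wm : Type*)
    [AddCommGroup V] [Module ℂ V] [AddCommGroup S] [Module ℂ S]
    [AddCommGroup W] [Module ℂ W] [AddCommGroup Wm] [Module ℂ Wm]
    (L : V →ₗ[ℂ] S) (E : S →ₗ[ℂ] V) (hE : L ∘ₗ E = LinearMap.id)
    (r : V →ₗ[ℂ] W) (K : W →ₗ[ℂ] V) (hK : L ∘ₗ K = 0)
    (B : W →ₗ[ℂ] Wm) (C : Wm →ₗ[ℂ] W)
    (g : Wm →ₗ[ℂ] Wm) (hg : g = B ∘ₗ r ∘ₗ K ∘ₗ C)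
    (g' : Wm →ₗ[ℂ] Wm)
    (hgg' : g ∘ₗ g' = LinearMap.id) (hg'g : g' ∘ₗ g = LinearMap.id)
    (G : S →ₗ[ℂ] V)
    (hG : G = E - K ∘ₗ C ∘ₗ g' ∘ₗ B ∘ₗ r ∘ₗ E) :
    L ∘ₗ G = LinearMap.id ∧ B ∘ₗ r ∘ₗ G = 0 := by
  subst hG hg
  constructor
  · ext x
    have h1 := LinearMap.congr_fun hE x
    have h2 := LinearMap.congr_fun hK (C (g' (B (r (E x)))))
    simp only [LinearMap.comp_apply, LinearMap.sub_apply, LinearMap.map_sub,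
      LinearMap.id_apply, LinearMap.zero_apply] at *
    rw [h2, h1, sub_zero]
  · ext x
    have h := LinearMap.congr_fun hgg' (B (r (E x)))
    simp only [LinearMap.comp_apply, LinearMap.sub_apply, LinearMap.map_sub,
      LinearMap.id_apply, LinearMap.zero_apply] at *
    rw [h, sub_self]
end

section
/- Assume g is invertible and let G := E - E * rᴴ * A * g⁻¹ * B * r * E. Then (i) for every interior point i : ι and every x' : X, (L * G) (Sum.inl i) x' = (1 : Matrix X X ℂ) (Sum.inl i) x' (G is a Green function of L with source and observation point in the interior), and (ii) B * r * G = 0 (G satisfies the homogeneous nonlocal boundary conditions). -/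
open Matrix

/-- Discrete (matrix) model: `G := E - E * rᴴ * A * g⁻¹ * B * r * E` is a Green
function of `L` at interior points and satisfies the homogeneous nonlocal
boundary conditions `B * r * G = 0`. -/
theorem green_function_matrix_representation
    {ι β : Type*} [Fintype ι] [Fintype β] [DecidableEq ι] [DecidableEq β]
    {m : ℕ}
    (r : Matrix β (ι ⊕ β) ℂ)
    (hr : ∀ (xb : β) (x : ι ⊕ β), r xb x = if x = Sum.inr xb then 1 else 0)
    (L E : Matrix (ι ⊕ β) (ι ⊕ β) ℂ) (hE : L * E = 1)
    (B Ba : Matrix ((Fin m) × β) β ℂ)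
    (A : Matrix β ((Fin m) × β) ℂ) (hA : A = Baᴴ)
    (g : Matrix ((Fin m) × β) ((Fin m) × β) ℂ)
    (hg : g = B * r * E * rᴴ * A)
    (hginv : Invertible g)
    (G : Matrix (ι ⊕ β) (ι ⊕ β) ℂ)
    (hG : G = E - E * rᴴ * A * g⁻¹ * B * r * E) :
    (∀ (i : ι) (x' : ι ⊕ β),
      (L * G) (Sum.inl i) x' = (1 : Matrix (ι ⊕ β) (ι ⊕ β) ℂ) (Sum.inl i) x')
    ∧ B * r * G = 0 := by
  have hgg : g * g⁻¹ = 1 := mul_nonsing_inv g (isUnit_det_of_invertible g)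
  constructor
  · intro i x'
    have hLG : L * G = 1 - rᴴ * (A * g⁻¹ * B * r * E) := by
      rw [hG, Matrix.mul_sub, hE]
      congr 1
      calc L * (E * rᴴ * A * g⁻¹ * B * r * E)
          = (L * E) * (rᴴ * (A * g⁻¹ * B * r * E)) := by
            simp only [Matrix.mul_assoc]
        _ = rᴴ * (A * g⁻¹ * B * r * E) := by rw [hE, Matrix.one_mul]
    rw [hLG]
    have : (rᴴ * (A * g⁻¹ * B * r * E)) (Sum.inl i) x' = 0 := by
      simp only [Matrix.mul_apply, Matrix.conjTranspose_apply, hr]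
      simp
    simp [Matrix.sub_apply, this]
  · have : B * r * G = B * r * E - g * (g⁻¹ * (B * r * E)) := by
      rw [hG, hg]
      simp only [Matrix.mul_sub, Matrix.mul_assoc]
    rw [this, ← Matrix.mul_assoc, hgg, Matrix.one_mul, sub_self]
end

section
/- Let G := E - K ∘ C ∘ g' ∘ B ∘ r ∘ E. For any source f : S and any inhomogeneous boundary data Φ : Wm, the function u := G f + K (C (g' Φ)) solves the inhomogeneous boundary value problem: L u = f and B (r u) = Φ. -/
/-- Abstract operator model: `u := G f + K (C (g' Φ))` (with
`G := E - K ∘ C ∘ g' ∘ B ∘ r ∘ E`) solves the inhomogeneous boundary value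
problem `L u = f`, `B (r u) = Φ`. -/
theorem solution_of_inhomogeneous_boundary_value_problem
    (V S W Wm : Type*)
    [AddCommGroup V] [Module ℂ V] [AddCommGroup S] [Module ℂ S]
    [AddCommGroup W] [Module ℂ W] [AddCommGroup Wm] [Module ℂ Wm]
    (L : V →ₗ[ℂ] S) (E : S →ₗ[ℂ] V) (hE : L ∘ₗ E = LinearMap.id)
    (r : V →ₗ[ℂ] W) (K : W →ₗ[ℂ] V) (hK : L ∘ₗ K = 0)
    (B : W →ₗ[ℂ] Wm) (C : Wm →ₗ[ℂ] W)
    (g : Wm →ₗ[ℂ] Wm) (hg : g = B ∘ₗ r ∘ₗ K ∘ₗ C)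
    (g' : Wm →ₗ[ℂ] Wm)
    (hgg' : g ∘ₗ g' = LinearMap.id) (hg'g : g' ∘ₗ g = LinearMap.id)
    (G : S →ₗ[ℂ] V)
    (hG : G = E - K ∘ₗ C ∘ₗ g' ∘ₗ B ∘ₗ r ∘ₗ E)
    (f : S) (Φ : Wm) (u : V)
    (hu : u = G f + K (C (g' Φ))) :
    L u = f ∧ B (r u) = Φ := by
  have hLE : ∀ s, L (E s) = s := fun s => congrArg (fun T => T s) hE
  have hLK : ∀ w, L (K w) = 0 := fun w => congrArg (fun T => T w) hK
  have hgapp : ∀ x, B (r (K (C x))) = g x := fun x => (congrArg (fun T => T x) hg).symm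
  have hgg'app : ∀ x, g (g' x) = x := fun x => congrArg (fun T => T x) hgg'
  subst hu hG
  constructor
  · simp [hLE, hLK]
  · simp only [map_add, map_sub, LinearMap.sub_apply, LinearMap.coe_comp, Function.comp_apply,
      hgapp, hgg'app]
    abel
end

section
/- Assume g is invertible and set h := Ba * r * Eᴴ * rᴴ * Bᴴ (so h = gᴴ is also invertible). Let G := E - E * rᴴ * Baᴴ * g⁻¹ * B * r * E be the Green function of the original problem and Gᵃ := Eᴴ - Eᴴ * rᴴ * Bᴴ * h⁻¹ * Ba * r * Eᴴ the Green function of the adjoint problem constructed from the adjoint fundamental solution Eᴬ := Eᴴ. Then Gᵃ = Gᴴ, i.e. Gᵃ(x, x') = conj(G(x', x)) for all x, x'. -/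
open Matrix

/-- The adjoint Green function built from the adjoint fundamental solution
`Eᴴ` and the adjoint boundary matrix `h = Ba * r * Eᴴ * rᴴ * Bᴴ` is the
conjugate transpose of the original Green function: `Gᵃ = Gᴴ`. -/
theorem adjoint_green_function_is_conj_transpose
    {ι β : Type*} [Fintype ι] [Fintype β] [DecidableEq ι] [DecidableEq β]
    {m : ℕ}
    (r : Matrix β (ι ⊕ β) ℂ)
    (hr : ∀ (xb : β) (x : ι ⊕ β), r xb x = if x = Sum.inr xb then 1 else 0)
    (E : Matrix (ι ⊕ β) (ι ⊕ β) ℂ)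
    (B Ba : Matrix ((Fin m) × β) β ℂ)
    (g : Matrix ((Fin m) × β) ((Fin m) × β) ℂ)
    (hg : g = B * r * E * rᴴ * Baᴴ)
    (hginv : Invertible g)
    (h : Matrix ((Fin m) × β) ((Fin m) × β) ℂ)
    (hh : h = Ba * r * Eᴴ * rᴴ * Bᴴ)
    (G : Matrix (ι ⊕ β) (ι ⊕ β) ℂ)
    (hG : G = E - E * rᴴ * Baᴴ * g⁻¹ * B * r * E)
    (Ga : Matrix (ι ⊕ β) (ι ⊕ β) ℂ)
    (hGa : Ga = Eᴴ - Eᴴ * rᴴ * Bᴴ * h⁻¹ * Ba * r * Eᴴ) :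
    Ga = Gᴴ := by
  have hhg : h = gᴴ := by
    simp [hh, hg, conjTranspose_mul, Matrix.mul_assoc]
  subst hGa hG hhg
  simp [hg, conjTranspose_mul, conjTranspose_nonsing_inv, Matrix.mul_assoc]
end

section
/- Assume g is invertible, let G := E - E * rᴴ * A * g⁻¹ * B * r * E, and assume in addition that E is a two-sided fundamental solution, E * L = 1. Then the Green function also satisfies the equation with the operator acting from the right on the second argument at interior source points: for every x : X and every interior point i : ι, (G * L) x (Sum.inl i) = (1 : Matrix X X ℂ) x (Sum.inl i). -/
open Matrix

/-- If `E` is a two-sided fundamental solution (`E * L = 1` as well), then the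
Green function also satisfies the equation with the operator acting from the
right, at interior source points. -/
theorem green_function_operator_from_right
    {ι β : Type*} [Fintype ι] [Fintype β] [DecidableEq ι] [DecidableEq β]
    {m : ℕ}
    (r : Matrix β (ι ⊕ β) ℂ)
    (hr : ∀ (xb : β) (x : ι ⊕ β), r xb x = if x = Sum.inr xb then 1 else 0)
    (L E : Matrix (ι ⊕ β) (ι ⊕ β) ℂ) (hE : L * E = 1) (hE' : E * L = 1)
    (B Ba : Matrix ((Fin m) × β) β ℂ)
    (A : Matrix β ((Fin m) × β) ℂ) (hA : A = Baᴴ)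
    (g : Matrix ((Fin m) × β) ((Fin m) × β) ℂ)
    (hg : g = B * r * E * rᴴ * A)
    (hginv : Invertible g)
    (G : Matrix (ι ⊕ β) (ι ⊕ β) ℂ)
    (hG : G = E - E * rᴴ * A * g⁻¹ * B * r * E) :
    ∀ (x : ι ⊕ β) (i : ι),
      (G * L) x (Sum.inl i) = (1 : Matrix (ι ⊕ β) (ι ⊕ β) ℂ) x (Sum.inl i) := by
  intro x i
  have hGL : G * L = 1 - E * rᴴ * A * g⁻¹ * B * r := by
    subst hG
    rw [Matrix.sub_mul, hE']
    congr 1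
    rw [mul_assoc (E * rᴴ * A * g⁻¹ * B * r) E L, hE', mul_one]
  rw [hGL]
  have hz : (E * rᴴ * A * g⁻¹ * B * r) x (Sum.inl i) = 0 := by
    rw [Matrix.mul_apply]
    apply Finset.sum_eq_zero
    intro xb _
    rw [hr]
    simp
  simp [Matrix.sub_apply, hz]
end

section
/- Assume g is invertible and let G := E - E * rᴴ * A * g⁻¹ * B * r * E. Then the Green function satisfies the adjoint boundary condition acting from the right on its second argument: G * rᴴ * Baᴴ = 0, i.e. for all x : X and all (j, x̄) : (Fin m) × β, the sum over boundary points x̄' of G(x, Sum.inr x̄') * conj(Ba((j, x̄), x̄')) vanishes. -/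
open Matrix

/-- The Green function satisfies the adjoint boundary condition acting from the
right on its second argument: `G * rᴴ * Baᴴ = 0`. -/
theorem green_function_adjoint_bc_from_right
    {ι β : Type*} [Fintype ι] [Fintype β] [DecidableEq ι] [DecidableEq β]
    {m : ℕ}
    (r : Matrix β (ι ⊕ β) ℂ)
    (hr : ∀ (xb : β) (x : ι ⊕ β), r xb x = if x = Sum.inr xb then 1 else 0)
    (E : Matrix (ι ⊕ β) (ι ⊕ β) ℂ)
    (B Ba : Matrix ((Fin m) × β) β ℂ)
    (A : Matrix β ((Fin m) × β) ℂ) (hA : A = Baᴴ)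
    (g : Matrix ((Fin m) × β) ((Fin m) × β) ℂ)
    (hg : g = B * r * E * rᴴ * A)
    (hginv : Invertible g)
    (G : Matrix (ι ⊕ β) (ι ⊕ β) ℂ)
    (hG : G = E - E * rᴴ * A * g⁻¹ * B * r * E) :
    G * rᴴ * Baᴴ = 0 := by
  subst hA hG
  have key : E * rᴴ * Baᴴ * g⁻¹ * B * r * E * rᴴ * Baᴴ = E * rᴴ * Baᴴ := by
    have h1 : E * rᴴ * Baᴴ * g⁻¹ * B * r * E * rᴴ * Baᴴ
        = E * rᴴ * Baᴴ * (g⁻¹ * g) := by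
      rw [hg]; simp only [Matrix.mul_assoc]
    rw [h1, Matrix.inv_mul_of_invertible, Matrix.mul_one]
  simp only [Matrix.sub_mul, key, sub_self]
end

section
/- Assume g is invertible and let G := E - E * rᴴ * A * g⁻¹ * B * r * E. Then the conjugate transpose Gᴴ (the adjoint Green function) satisfies the homogeneous adjoint boundary conditions: Ba * r * Gᴴ = 0. -/
open Matrix

/-- The conjugate transpose `Gᴴ` of the Green function (the adjoint Green
function) satisfies the homogeneous adjoint boundary conditions
`Ba * r * Gᴴ = 0`. -/
theorem adjoint_green_function_satisfies_adjoint_bc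
    {ι β : Type*} [Fintype ι] [Fintype β] [DecidableEq ι] [DecidableEq β]
    {m : ℕ}
    (r : Matrix β (ι ⊕ β) ℂ)
    (hr : ∀ (xb : β) (x : ι ⊕ β), r xb x = if x = Sum.inr xb then 1 else 0)
    (E : Matrix (ι ⊕ β) (ι ⊕ β) ℂ)
    (B Ba : Matrix ((Fin m) × β) β ℂ)
    (A : Matrix β ((Fin m) × β) ℂ) (hA : A = Baᴴ)
    (g : Matrix ((Fin m) × β) ((Fin m) × β) ℂ)
    (hg : g = B * r * E * rᴴ * A)
    (hginv : Invertible g)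
    (G : Matrix (ι ⊕ β) (ι ⊕ β) ℂ)
    (hG : G = E - E * rᴴ * A * g⁻¹ * B * r * E) :
    Ba * r * Gᴴ = 0 := by
  have hBa : Aᴴ = Ba := by rw [hA, conjTranspose_conjTranspose]
  have hgH : gᴴ = Ba * r * Eᴴ * rᴴ * Bᴴ := by
    rw [hg]
    simp only [conjTranspose_mul, conjTranspose_conjTranspose, hBa, ← Matrix.mul_assoc]
  have hdet : IsUnit gᴴ.det := by
    rw [Matrix.det_conjTranspose]
    exact (Matrix.isUnit_det_of_invertible g).star
  have hcancel : gᴴ * (gᴴ)⁻¹ = 1 := Matrix.mul_nonsing_inv _ hdet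
  have hGH : Gᴴ = Eᴴ - Eᴴ * rᴴ * Bᴴ * (gᴴ)⁻¹ * Ba * r * Eᴴ := by
    rw [hG]
    simp only [conjTranspose_sub, conjTranspose_mul, conjTranspose_conjTranspose, hBa,
      Matrix.conjTranspose_nonsing_inv, ← Matrix.mul_assoc]
  rw [hGH]
  have : Ba * r * (Eᴴ - Eᴴ * rᴴ * Bᴴ * (gᴴ)⁻¹ * Ba * r * Eᴴ)
      = Ba * r * Eᴴ - (gᴴ * (gᴴ)⁻¹) * (Ba * r * Eᴴ) := by
    simp only [Matrix.mul_sub, hgH, ← Matrix.mul_assoc]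
  rw [this, hcancel, Matrix.one_mul, sub_self]
end

section
/- Assume the boundary restriction Ē := r * E * rᴴ : Matrix β β ℂ of the fundamental solution is invertible, and define the Dirichlet Green function G_D := E - E * rᴴ * Ē⁻¹ * r * E. Then (i) r * G_D = 0 (G_D vanishes when its first argument lies on the boundary), (ii) G_D * rᴴ = 0 (G_D vanishes when its second argument lies on the boundary), and (iii) for every interior point i : ι and every x' : X, (L * G_D) (Sum.inl i) x' = (1 : Matrix X X ℂ) (Sum.inl i) x'. -/
open Matrix

/-- Dirichlet problem: with `Ē := r * E * rᴴ` invertible, the Dirichlet Green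
function `G_D := E - E * rᴴ * Ē⁻¹ * r * E` vanishes when either argument lies
on the boundary, and is a Green function of `L` at interior points. -/
theorem dirichlet_green_function
    {ι β : Type*} [Fintype ι] [Fintype β] [DecidableEq ι] [DecidableEq β]
    (r : Matrix β (ι ⊕ β) ℂ)
    (hr : ∀ (xb : β) (x : ι ⊕ β), r xb x = if x = Sum.inr xb then 1 else 0)
    (L E : Matrix (ι ⊕ β) (ι ⊕ β) ℂ) (hE : L * E = 1)
    (Ebar : Matrix β β ℂ) (hEbar : Ebar = r * E * rᴴ)
    (hEbarInv : Invertible Ebar)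
    (GD : Matrix (ι ⊕ β) (ι ⊕ β) ℂ)
    (hGD : GD = E - E * rᴴ * Ebar⁻¹ * r * E) :
    r * GD = 0 ∧ GD * rᴴ = 0 ∧
    (∀ (i : ι) (x' : ι ⊕ β),
      (L * GD) (Sum.inl i) x' = (1 : Matrix (ι ⊕ β) (ι ⊕ β) ℂ) (Sum.inl i) x') := by
  have hinv : Ebar⁻¹ * Ebar = 1 := inv_mul_of_invertible Ebar
  have hinv' : Ebar * Ebar⁻¹ = 1 := mul_inv_of_invertible Ebar
  refine ⟨?_, ?_, ?_⟩
  · have key : r * (E * rᴴ * Ebar⁻¹ * r * E) = r * E := by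
      calc r * (E * rᴴ * Ebar⁻¹ * r * E)
          = (r * E * rᴴ) * Ebar⁻¹ * (r * E) := by
            simp only [Matrix.mul_assoc]
        _ = Ebar * Ebar⁻¹ * (r * E) := by rw [hEbar]
        _ = r * E := by rw [hinv', Matrix.one_mul]
    rw [hGD, Matrix.mul_sub, key, sub_self]
  · have key : (E * rᴴ * Ebar⁻¹ * r * E) * rᴴ = E * rᴴ := by
      calc (E * rᴴ * Ebar⁻¹ * r * E) * rᴴ
          = E * rᴴ * (Ebar⁻¹ * (r * E * rᴴ)) := by
            simp only [Matrix.mul_assoc]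
        _ = E * rᴴ * (Ebar⁻¹ * Ebar) := by rw [hEbar]
        _ = E * rᴴ := by rw [hinv, Matrix.mul_one]
    rw [hGD, Matrix.sub_mul, key, sub_self]
  · intro i x'
    have hLGD : L * GD = 1 - rᴴ * Ebar⁻¹ * r * E := by
      rw [hGD, Matrix.mul_sub, hE]
      congr 1
      calc L * (E * rᴴ * Ebar⁻¹ * r * E)
          = (L * E) * (rᴴ * (Ebar⁻¹ * (r * E))) := by
            simp only [Matrix.mul_assoc]
        _ = rᴴ * Ebar⁻¹ * r * E := by
            rw [hE, Matrix.one_mul]; simp only [Matrix.mul_assoc]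
    rw [hLGD]
    have hz : (rᴴ * Ebar⁻¹ * r * E) (Sum.inl i) x' = 0 := by
      simp [Matrix.mul_apply, Matrix.conjTranspose_apply, hr]
    simp [Matrix.sub_apply, hz]
end

section
/- For any source vector f : X → ℂ and any inhomogeneous boundary data Φ : (Fin m) × β → ℂ, assume g is invertible, set G := E - E * rᴴ * A * g⁻¹ * B * r * E, and define u := G.mulVec f + (E * rᴴ * A * g⁻¹).mulVec Φ. Then (i) for every interior point i : ι, (L.mulVec u) (Sum.inl i) = f (Sum.inl i) (the inhomogeneous equation holds in the interior), and (ii) (B * r).mulVec u = Φ (the inhomogeneous nonlocal boundary conditions hold). -/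
open Matrix

/-- Solution of the inhomogeneous boundary value problem in the matrix model:
`u := G.mulVec f + (E * rᴴ * A * g⁻¹).mulVec Φ` satisfies the inhomogeneous
equation at interior points and the inhomogeneous nonlocal boundary
conditions. -/
theorem solution_of_inhomogeneous_bvp_matrix
    {ι β : Type*} [Fintype ι] [Fintype β] [DecidableEq ι] [DecidableEq β]
    {m : ℕ}
    (r : Matrix β (ι ⊕ β) ℂ)
    (hr : ∀ (xb : β) (x : ι ⊕ β), r xb x = if x = Sum.inr xb then 1 else 0)
    (L E : Matrix (ι ⊕ β) (ι ⊕ β) ℂ) (hE : L * E = 1)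
    (B Ba : Matrix ((Fin m) × β) β ℂ)
    (A : Matrix β ((Fin m) × β) ℂ) (hA : A = Baᴴ)
    (g : Matrix ((Fin m) × β) ((Fin m) × β) ℂ)
    (hg : g = B * r * E * rᴴ * A)
    (hginv : Invertible g)
    (G : Matrix (ι ⊕ β) (ι ⊕ β) ℂ)
    (hG : G = E - E * rᴴ * A * g⁻¹ * B * r * E)
    (f : (ι ⊕ β) → ℂ) (Φ : (Fin m) × β → ℂ)
    (u : (ι ⊕ β) → ℂ)
    (hu : u = G.mulVec f + (E * rᴴ * A * g⁻¹).mulVec Φ) :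
    (∀ i : ι, L.mulVec u (Sum.inl i) = f (Sum.inl i)) ∧
    (B * r).mulVec u = Φ := by
  have hLE : ∀ {κ : Type} [Fintype κ] (M : Matrix (ι ⊕ β) κ ℂ), L * (E * M) = M := by
    intro κ _ M
    rw [← Matrix.mul_assoc, hE, Matrix.one_mul]
  -- rows of rᴴ at interior points vanish
  have hrow : ∀ (i : ι) (j : β), rᴴ (Sum.inl i) j = 0 := by
    intro i j
    simp [Matrix.conjTranspose_apply, hr]
  have hrowM : ∀ (M : Matrix β (ι ⊕ β) ℂ) (v : (ι ⊕ β) → ℂ) (i : ι),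
      (rᴴ * M).mulVec v (Sum.inl i) = 0 := by
    intro M v i
    simp [Matrix.mulVec, dotProduct, Matrix.mul_apply, hr]
  have hrowM' : ∀ (M : Matrix β ((Fin m) × β) ℂ) (v : (Fin m) × β → ℂ) (i : ι),
      (rᴴ * M).mulVec v (Sum.inl i) = 0 := by
    intro M v i
    simp [Matrix.mulVec, dotProduct, Matrix.mul_apply, hr]
  have hLG : L * G = 1 - rᴴ * A * g⁻¹ * B * r * E := by
    rw [hG, Matrix.mul_sub, hE]
    simp only [Matrix.mul_assoc]
    rw [← Matrix.mul_assoc L E, hE, Matrix.one_mul]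
  have hLΦ : L * (E * rᴴ * A * g⁻¹) = rᴴ * A * g⁻¹ := by
    rw [show E * rᴴ * A * g⁻¹ = E * (rᴴ * A * g⁻¹) by
      simp only [Matrix.mul_assoc], ← Matrix.mul_assoc L E, hE, Matrix.one_mul]
  constructor
  · intro i
    have : L.mulVec u = (L * G).mulVec f + (L * (E * rᴴ * A * g⁻¹)).mulVec Φ := by
      rw [hu, Matrix.mulVec_add, Matrix.mulVec_mulVec, Matrix.mulVec_mulVec]
    rw [this, hLG, hLΦ]
    have h1 : ((1 : Matrix (ι ⊕ β) (ι ⊕ β) ℂ) - rᴴ * A * g⁻¹ * B * r * E).mulVec f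
        = f - (rᴴ * (A * g⁻¹ * B * r * E)).mulVec f := by
      rw [Matrix.sub_mulVec, Matrix.one_mulVec]
      simp only [Matrix.mul_assoc]
    rw [h1]
    have h2 : (rᴴ * A * g⁻¹).mulVec Φ = (rᴴ * (A * g⁻¹)).mulVec Φ := by
      simp only [Matrix.mul_assoc]
    rw [h2]
    simp only [Pi.add_apply, Pi.sub_apply]
    rw [hrowM (A * g⁻¹ * B * r * E) f i, hrowM' (A * g⁻¹) Φ i]; ring
  · have hBrG : (B * r) * G = 0 := by
      rw [hG, Matrix.mul_sub]
      have : B * r * (E * rᴴ * A * g⁻¹ * B * r * E)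
          = (B * r * E * rᴴ * A) * g⁻¹ * (B * r * E) := by
        simp only [Matrix.mul_assoc]
      rw [this, ← hg, Matrix.mul_inv_of_invertible, Matrix.one_mul,
        Matrix.mul_assoc, sub_self]
    have hBrΦ : (B * r) * (E * rᴴ * A * g⁻¹) = 1 := by
      have : B * r * (E * rᴴ * A * g⁻¹) = (B * r * E * rᴴ * A) * g⁻¹ := by
        simp only [Matrix.mul_assoc]
      rw [this, ← hg, Matrix.mul_inv_of_invertible]
    rw [hu, Matrix.mulVec_add, Matrix.mulVec_mulVec, Matrix.mulVec_mulVec,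
      hBrG, hBrΦ, Matrix.zero_mulVec, Matrix.one_mulVec, zero_add]
end

section
/- With g₁₁ := b₁ * Ē * a₁ invertible, define the first partial Green function G¹ := E - E * rᴴ * a₁ * g₁₁⁻¹ * b₁ * r * E and the second-step boundary matrix g₂ := b₂ * r * G¹ * rᴴ * a₂. Then g₂ equals the Schur complement of the full 2×2 boundary block matrix: g₂ = g₂₂ - g₂₁ * g₁₁⁻¹ * g₁₂, where g_{ij} := b_i * Ē * a_j. Moreover, if g₂ is also invertible, then the Green function obtained from the full block matrix 𝔤 := Matrix.fromBlocks g₁₁ g₁₂ g₂₁ g₂₂ satisfies the recursive decomposition: E - E * rᴴ * (Matrix.fromColumns a₁ a₂) * 𝔤⁻¹ * (Matrix.fromRows b₁ b₂) * r * E = G¹ - G¹ * rᴴ * a₂ * g₂⁻¹ * b₂ * r * G¹. -/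
open Matrix

set_option maxHeartbeats 1600000 in
/-- Two boundary conditions: the second-step boundary matrix `g₂` is the Schur
complement of the full 2×2 boundary block matrix, and the Green function built
from the full block matrix admits the recursive decomposition through the
first partial Green function `G¹`. -/
theorem green_function_recursive_decomposition_two_conditions
    {ι β : Type*} [Fintype ι] [Fintype β] [DecidableEq ι] [DecidableEq β]
    (r : Matrix β (ι ⊕ β) ℂ)
    (hr : ∀ (xb : β) (x : ι ⊕ β), r xb x = if x = Sum.inr xb then 1 else 0)
    (E : Matrix (ι ⊕ β) (ι ⊕ β) ℂ)
    (Ebar : Matrix β β ℂ) (hEbar : Ebar = r * E * rᴴ)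
    (b₁ b₂ a₁ a₂ : Matrix β β ℂ)
    (g₁₁ g₁₂ g₂₁ g₂₂ : Matrix β β ℂ)
    (h₁₁ : g₁₁ = b₁ * Ebar * a₁) (h₁₂ : g₁₂ = b₁ * Ebar * a₂)
    (h₂₁ : g₂₁ = b₂ * Ebar * a₁) (h₂₂ : g₂₂ = b₂ * Ebar * a₂)
    (hg₁₁ : Invertible g₁₁)
    (G₁ : Matrix (ι ⊕ β) (ι ⊕ β) ℂ)
    (hG₁ : G₁ = E - E * rᴴ * a₁ * g₁₁⁻¹ * b₁ * r * E)
    (g₂ : Matrix β β ℂ) (hg₂ : g₂ = b₂ * r * G₁ * rᴴ * a₂)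
    (𝔤 : Matrix (β ⊕ β) (β ⊕ β) ℂ)
    (h𝔤 : 𝔤 = Matrix.fromBlocks g₁₁ g₁₂ g₂₁ g₂₂) :
    g₂ = g₂₂ - g₂₁ * g₁₁⁻¹ * g₁₂ ∧
    (Invertible g₂ →
      E - E * rᴴ * (Matrix.fromCols a₁ a₂) * 𝔤⁻¹ * (Matrix.fromRows b₁ b₂) * r * E
        = G₁ - G₁ * rᴴ * a₂ * g₂⁻¹ * b₂ * r * G₁) := by
  haveI := hg₁₁
  have key : r * G₁ * rᴴ = Ebar - Ebar * a₁ * g₁₁⁻¹ * (b₁ * Ebar) := by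
    rw [hG₁, hEbar]
    simp only [Matrix.mul_sub, Matrix.sub_mul, Matrix.mul_assoc]
  have part1 : g₂ = g₂₂ - g₂₁ * g₁₁⁻¹ * g₁₂ := by
    have h : b₂ * r * G₁ * rᴴ * a₂ = b₂ * (r * G₁ * rᴴ) * a₂ := by
      simp only [Matrix.mul_assoc]
    rw [hg₂, h, key, h₂₂, h₂₁, h₁₂]
    noncomm_ring
  refine ⟨part1, fun i2 => ?_⟩
  haveI := i2
  have hA : g₁₁ * g₁₁⁻¹ = 1 := Matrix.mul_inv_of_invertible g₁₁
  have hB : g₂ * g₂⁻¹ = 1 := Matrix.mul_inv_of_invertible g₂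
  have hS : g₂₂ = g₂ + g₂₁ * g₁₁⁻¹ * g₁₂ := by rw [part1]; abel
  have hinv : 𝔤⁻¹ = Matrix.fromBlocks
      (g₁₁⁻¹ + g₁₁⁻¹ * g₁₂ * g₂⁻¹ * (g₂₁ * g₁₁⁻¹))
      (-(g₁₁⁻¹ * g₁₂ * g₂⁻¹))
      (-(g₂⁻¹ * (g₂₁ * g₁₁⁻¹)))
      (g₂⁻¹) := by
    refine Matrix.inv_eq_right_inv ?_
    have B11 : g₁₁ * (g₁₁⁻¹ + g₁₁⁻¹ * g₁₂ * g₂⁻¹ * (g₂₁ * g₁₁⁻¹))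
        + g₁₂ * -(g₂⁻¹ * (g₂₁ * g₁₁⁻¹)) = 1 := by
      simp only [Matrix.mul_add, Matrix.mul_neg, ← Matrix.mul_assoc, hA, Matrix.one_mul]
      abel
    have B12 : g₁₁ * -(g₁₁⁻¹ * g₁₂ * g₂⁻¹) + g₁₂ * g₂⁻¹ = 0 := by
      simp only [Matrix.mul_neg, ← Matrix.mul_assoc, hA, Matrix.one_mul]
      abel
    have B21 : g₂₁ * (g₁₁⁻¹ + g₁₁⁻¹ * g₁₂ * g₂⁻¹ * (g₂₁ * g₁₁⁻¹))
        + g₂₂ * -(g₂⁻¹ * (g₂₁ * g₁₁⁻¹)) = 0 := by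
      rw [hS]
      simp only [Matrix.mul_add, Matrix.add_mul, Matrix.mul_neg, ← Matrix.mul_assoc, hB,
        Matrix.one_mul]
      abel
    have B22 : g₂₁ * -(g₁₁⁻¹ * g₁₂ * g₂⁻¹) + g₂₂ * g₂⁻¹ = 1 := by
      rw [hS]
      simp only [Matrix.mul_neg, Matrix.add_mul, ← Matrix.mul_assoc, hB, Matrix.one_mul]
      abel
    rw [h𝔤, Matrix.fromBlocks_multiply, B11, B12, B21, B22, Matrix.fromBlocks_one]
  -- abbreviations
  have hG₁' : G₁ = E - (E * rᴴ) * (a₁ * g₁₁⁻¹ * b₁) * (r * E) := by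
    rw [hG₁]; simp only [Matrix.mul_assoc]
  have hGr : G₁ * rᴴ = E * rᴴ - (E * rᴴ) * (a₁ * g₁₁⁻¹ * b₁ * Ebar) := by
    rw [hG₁, hEbar]
    simp only [Matrix.sub_mul, Matrix.mul_assoc]
  have hrG : r * G₁ = r * E - (Ebar * (a₁ * g₁₁⁻¹ * b₁)) * (r * E) := by
    rw [hG₁, hEbar]
    simp only [Matrix.mul_sub, Matrix.mul_assoc]
  set k := a₁ * g₁₁⁻¹ * b₁ with hk
  set s := a₂ * g₂⁻¹ * b₂ with hs
  have hM : Matrix.fromCols a₁ a₂ * 𝔤⁻¹ * Matrix.fromRows b₁ b₂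
      = k + s - k * Ebar * s - s * Ebar * k + k * Ebar * s * Ebar * k := by
    rw [hinv, Matrix.fromCols_mul_fromBlocks, Matrix.fromCols_mul_fromRows,
      h₁₂, h₂₁, hk, hs]
    noncomm_ring
  have hL : E * rᴴ * (Matrix.fromCols a₁ a₂) * 𝔤⁻¹ * (Matrix.fromRows b₁ b₂) * r * E
      = (E * rᴴ) * (Matrix.fromCols a₁ a₂ * 𝔤⁻¹ * Matrix.fromRows b₁ b₂) * (r * E) := by
    simp only [Matrix.mul_assoc]
  have hRre : G₁ * rᴴ * a₂ * g₂⁻¹ * b₂ * r * G₁ = (G₁ * rᴴ) * s * (r * G₁) := by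
    rw [hs]; simp only [Matrix.mul_assoc]
  rw [hL, hM, hRre, hGr, hrG, hG₁']
  simp only [Matrix.mul_add, Matrix.add_mul, Matrix.mul_sub, Matrix.sub_mul, Matrix.mul_assoc]
  abel
end

section
/- Suppose Gs : ℕ → Matrix X X ℂ is a sequence with Gs 0 = E such that for every j < m the j-th step boundary matrix g_j := (b j) * r * (Gs j) * rᴴ * (a j) : Matrix β β ℂ is invertible and Gs (j+1) = Gs j - (Gs j) * rᴴ * (a j) * (g_j)⁻¹ * (b j) * r * (Gs j). Define the full boundary matrix 𝔤 : Matrix ((Fin m) × β) ((Fin m) × β) ℂ by 𝔤 (i, x̄) (j, ȳ) := ((b i) * Ē * (a j)) x̄ ȳ, the stacked boundary operator Bf : Matrix ((Fin m) × β) β ℂ by Bf (i, x̄) ȳ := (b i) x̄ ȳ, and Af : Matrix β ((Fin m) × β) ℂ by Af x̄ (j, ȳ) := (a j) x̄ ȳ. If 𝔤 is invertible, then the recursively constructed Green function agrees with the closed-form one: Gs m = E - E * rᴴ * Af * 𝔤⁻¹ * Bf * r * E. -/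
open Matrix

private theorem mul_tail2 {l m k : Type*} [Fintype m] [Fintype k]
    {A : Matrix l m ℂ} {B : Matrix m k ℂ} {C : Matrix l k ℂ} (h : A * B = C)
    {n : Type*} (Y : Matrix k n ℂ) : A * (B * Y) = C * Y := by
  rw [← Matrix.mul_assoc, h]

private theorem mul_tail3 {l m k j : Type*} [Fintype m] [Fintype k] [Fintype j]
    {A : Matrix l m ℂ} {B : Matrix m k ℂ} {C : Matrix k j ℂ} {D : Matrix l j ℂ}
    (h : A * B * C = D) {n : Type*} (Y : Matrix j n ℂ) :
    A * (B * (C * Y)) = D * Y := by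
  rw [← Matrix.mul_assoc, ← Matrix.mul_assoc, h]

private theorem assoc3 {l m k j : Type*} [Fintype m] [Fintype k]
    {A : Matrix l m ℂ} {B : Matrix m k ℂ} {C : Matrix k j ℂ} {D : Matrix l j ℂ}
    (h : A * B * C = D) : A * (B * C) = D := by rw [← Matrix.mul_assoc, h]

private theorem mul_tail3' {l m k j : Type*} [Fintype m] [Fintype k] [Fintype j]
    {A : Matrix l m ℂ} {B : Matrix m k ℂ} {C : Matrix k j ℂ} {D E' : Matrix l j ℂ}
    (h : A * B * C = D + E') {n : Type*} (Y : Matrix j n ℂ) :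
    A * (B * (C * Y)) = D * Y + E' * Y := by
  rw [← Matrix.mul_assoc, ← Matrix.mul_assoc, h, Matrix.add_mul]

private theorem assoc3' {l m k j : Type*} [Fintype m] [Fintype k]
    {A : Matrix l m ℂ} {B : Matrix m k ℂ} {C : Matrix k j ℂ} {D E' : Matrix l j ℂ}
    (h : A * B * C = D + E') : A * (B * C) = D + E' := by rw [← Matrix.mul_assoc, h]

private theorem core_step {X M B : Type*} [Fintype X] [Fintype M] [Fintype B] [DecidableEq B]
    (E : Matrix X X ℂ) (W : Matrix X M ℂ) (Z : Matrix M X ℂ)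
    (𝔤 K Q : Matrix M M ℂ) (P : Matrix B M ℂ) (g gI : Matrix B B ℂ)
    (h𝔤 : Z * E * W = 𝔤)
    (hPP : P * Pᵀ = 1) (hPQ : P * Q = 0) (hQP : Q * Pᵀ = 0)
    (hKQ : K * Q = K) (hQK : Q * K = K)
    (hQgK : Q * 𝔤 * K = Q) (hKgQ : K * 𝔤 * Q = Q)
    (hg : g = P * (𝔤 * Pᵀ) - P * (𝔤 * (K * (𝔤 * Pᵀ))))
    (hg1 : g * gI = 1) (hg2 : gI * g = 1) :
    ∃ K' : Matrix M M ℂ,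
      ((E - E * W * K * Z * E) - (E - E * W * K * Z * E) * (W * Pᵀ) * gI * (P * Z) *
          (E - E * W * K * Z * E) = E - E * W * K' * Z * E) ∧
      K' * (Q + Pᵀ * P) = K' ∧ (Q + Pᵀ * P) * K' = K' ∧
      (Q + Pᵀ * P) * 𝔤 * K' = Q + Pᵀ * P ∧ K' * 𝔤 * (Q + Pᵀ * P) = Q + Pᵀ * P := by
  obtain ⟨σ, hσ⟩ : ∃ σ, σ = Pᵀ * gI * P := ⟨_, rfl⟩
  obtain ⟨π, hπ⟩ : ∃ π, π = Pᵀ * P := ⟨_, rfl⟩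
  have hKPt : K * Pᵀ = 0 := by rw [← hKQ, Matrix.mul_assoc, hQP, Matrix.mul_zero]
  have hPK : P * K = 0 := by rw [← hQK, ← Matrix.mul_assoc, hPQ, Matrix.zero_mul]
  have hKπ : K * π = 0 := by rw [hπ, ← Matrix.mul_assoc, hKPt, Matrix.zero_mul]
  have hπK : π * K = 0 := by rw [hπ, Matrix.mul_assoc, hPK, Matrix.mul_zero]
  have hσQ : σ * Q = 0 := by rw [hσ, Matrix.mul_assoc, hPQ, Matrix.mul_zero]
  have hQσ : Q * σ = 0 := by
    rw [hσ, ← Matrix.mul_assoc, ← Matrix.mul_assoc, hQP, Matrix.zero_mul, Matrix.zero_mul]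
  have hπQ : π * Q = 0 := by rw [hπ, Matrix.mul_assoc, hPQ, Matrix.mul_zero]
  have hQπ : Q * π = 0 := by rw [hπ, ← Matrix.mul_assoc, hQP, Matrix.zero_mul]
  have hσπ : σ * π = σ := by
    simp only [hσ, hπ, Matrix.mul_assoc, mul_tail2 hPP, Matrix.one_mul]
  have hπσ : π * σ = σ := by
    simp only [hσ, hπ, Matrix.mul_assoc, mul_tail2 hPP, Matrix.one_mul]
  have hππ : π * π = π := by
    simp only [hπ, Matrix.mul_assoc, mul_tail2 hPP, Matrix.one_mul]
  have hKσ : K * σ = 0 := by rw [hσ, ← Matrix.mul_assoc, ← Matrix.mul_assoc, hKPt,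
    Matrix.zero_mul, Matrix.zero_mul]
  have hσK : σ * K = 0 := by rw [hσ, Matrix.mul_assoc, hPK, Matrix.mul_zero]
  have e1 : π * 𝔤 * σ - π * 𝔤 * K * 𝔤 * σ = Pᵀ * (g * (gI * P)) := by
    rw [hg]; simp only [hσ, hπ, Matrix.sub_mul, Matrix.mul_sub, Matrix.mul_assoc]
  have R1 : π * 𝔤 * σ = π + π * 𝔤 * K * 𝔤 * σ := by
    rw [mul_tail2 hg1, Matrix.one_mul, ← hπ] at e1
    exact sub_eq_iff_eq_add.mp e1
  have e2 : σ * 𝔤 * π - σ * 𝔤 * K * 𝔤 * π = Pᵀ * (gI * (g * P)) := by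
    rw [hg]; simp only [hσ, hπ, Matrix.sub_mul, Matrix.mul_sub, Matrix.mul_assoc]
  have R2 : σ * 𝔤 * π = π + σ * 𝔤 * K * 𝔤 * π := by
    rw [mul_tail2 hg2, Matrix.one_mul, ← hπ] at e2
    exact sub_eq_iff_eq_add.mp e2
  refine ⟨K + σ - K * 𝔤 * σ - σ * 𝔤 * K + K * 𝔤 * σ * 𝔤 * K, ?_, ?_, ?_, ?_, ?_⟩
  · have key : (E - E * W * K * Z * E) * (W * Pᵀ) * gI * (P * Z) * (E - E * W * K * Z * E)
        = (E - E * W * K * Z * E) * (W * (σ * (Z * (E - E * W * K * Z * E)))) := by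
      rw [hσ]; simp only [Matrix.mul_assoc]
    rw [key]
    simp only [Matrix.mul_sub, Matrix.sub_mul, Matrix.mul_add, Matrix.add_mul,
      Matrix.mul_assoc, mul_tail3 h𝔤, assoc3 h𝔤]
    first | abel | skip
  · rw [← hπ]
    simp only [Matrix.mul_add, Matrix.add_mul, Matrix.mul_sub, Matrix.sub_mul,
      Matrix.mul_assoc, hKQ, hKπ, hσQ, hσπ, hQK, hQπ, hπQ, hQσ, hπσ, hππ, hπK, hKσ, hσK,
      mul_tail2 hKQ, mul_tail2 hKπ, mul_tail2 hσQ, mul_tail2 hσπ, mul_tail2 hQK,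
      mul_tail2 hQπ, mul_tail2 hπQ, mul_tail2 hQσ, mul_tail2 hπσ, mul_tail2 hππ,
      mul_tail2 hπK, mul_tail2 hKσ, mul_tail2 hσK,
      mul_tail3 hQgK, assoc3 hQgK, mul_tail3 hKgQ, assoc3 hKgQ,
      mul_tail3' R1, assoc3' R1, mul_tail3' R2, assoc3' R2,
      Matrix.mul_zero, Matrix.zero_mul, add_zero, zero_add, sub_zero]
    first | abel | skip
  · rw [← hπ]
    simp only [Matrix.mul_add, Matrix.add_mul, Matrix.mul_sub, Matrix.sub_mul,
      Matrix.mul_assoc, hKQ, hKπ, hσQ, hσπ, hQK, hQπ, hπQ, hQσ, hπσ, hππ, hπK, hKσ, hσK,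
      mul_tail2 hKQ, mul_tail2 hKπ, mul_tail2 hσQ, mul_tail2 hσπ, mul_tail2 hQK,
      mul_tail2 hQπ, mul_tail2 hπQ, mul_tail2 hQσ, mul_tail2 hπσ, mul_tail2 hππ,
      mul_tail2 hπK, mul_tail2 hKσ, mul_tail2 hσK,
      mul_tail3 hQgK, assoc3 hQgK, mul_tail3 hKgQ, assoc3 hKgQ,
      mul_tail3' R1, assoc3' R1, mul_tail3' R2, assoc3' R2,
      Matrix.mul_zero, Matrix.zero_mul, add_zero, zero_add, sub_zero]
    first | abel | skip
  · rw [← hπ]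
    simp only [Matrix.mul_add, Matrix.add_mul, Matrix.mul_sub, Matrix.sub_mul,
      Matrix.mul_assoc, hKQ, hKπ, hσQ, hσπ, hQK, hQπ, hπQ, hQσ, hπσ, hππ, hπK, hKσ, hσK,
      mul_tail2 hKQ, mul_tail2 hKπ, mul_tail2 hσQ, mul_tail2 hσπ, mul_tail2 hQK,
      mul_tail2 hQπ, mul_tail2 hπQ, mul_tail2 hQσ, mul_tail2 hπσ, mul_tail2 hππ,
      mul_tail2 hπK, mul_tail2 hKσ, mul_tail2 hσK,
      mul_tail3 hQgK, assoc3 hQgK, mul_tail3 hKgQ, assoc3 hKgQ,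
      mul_tail3' R1, assoc3' R1, mul_tail3' R2, assoc3' R2,
      Matrix.mul_zero, Matrix.zero_mul, add_zero, zero_add, sub_zero]
    first | abel | skip
  · rw [← hπ]
    simp only [Matrix.mul_add, Matrix.add_mul, Matrix.mul_sub, Matrix.sub_mul,
      Matrix.mul_assoc, hKQ, hKπ, hσQ, hσπ, hQK, hQπ, hπQ, hQσ, hπσ, hππ, hπK, hKσ, hσK,
      mul_tail2 hKQ, mul_tail2 hKπ, mul_tail2 hσQ, mul_tail2 hσπ, mul_tail2 hQK,
      mul_tail2 hQπ, mul_tail2 hπQ, mul_tail2 hQσ, mul_tail2 hπσ, mul_tail2 hππ,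
      mul_tail2 hπK, mul_tail2 hKσ, mul_tail2 hσK,
      mul_tail3 hQgK, assoc3 hQgK, mul_tail3 hKgQ, assoc3 hKgQ,
      mul_tail3' R1, assoc3' R1, mul_tail3' R2, assoc3' R2,
      Matrix.mul_zero, Matrix.zero_mul, add_zero, zero_add, sub_zero]
    first | abel | skip

section PQ

private def Pmat {m : ℕ} {β : Type*} [DecidableEq β] (j : Fin m) : Matrix β (Fin m × β) ℂ :=
  Matrix.of fun x q => if q = (j, x) then 1 else 0

private def Qmat (m : ℕ) (β : Type*) [DecidableEq β] (n : ℕ) :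
    Matrix (Fin m × β) (Fin m × β) ℂ :=
  Matrix.of fun p q => if p = q ∧ (p.1 : ℕ) < n then 1 else 0

variable {m : ℕ} {β : Type*} [DecidableEq β] [Fintype β]

private theorem Pmat_PPt (j : Fin m) : Pmat (β := β) j * (Pmat (β := β) j)ᵀ = 1 := by
  ext x y
  simp only [Pmat, Matrix.mul_apply, Matrix.transpose_apply, Matrix.of_apply,
    Matrix.one_apply]
  rw [Finset.sum_eq_single ((j, x) : Fin m × β)]
  · simp [Prod.ext_iff, eq_comm]
  · intro q _ hq; simp [hq]
  · intro h; exact absurd (Finset.mem_univ _) h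

private theorem Pmat_Q (j : ℕ) (hj : j < m) :
    Pmat (β := β) ⟨j, hj⟩ * Qmat m β j = 0 := by
  ext x q
  simp only [Pmat, Qmat, Matrix.mul_apply, Matrix.of_apply, Matrix.zero_apply]
  rw [Finset.sum_eq_zero]
  intro p _
  rcases eq_or_ne p (⟨⟨j, hj⟩, x⟩ : Fin m × β) with h | h
  · subst h; simp
  · simp [h]

private theorem Q_Pt (j : ℕ) (hj : j < m) :
    Qmat m β j * (Pmat (β := β) ⟨j, hj⟩)ᵀ = 0 := by
  ext p x
  simp only [Qmat, Pmat, Matrix.mul_apply, Matrix.of_apply, Matrix.zero_apply,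
    transpose_apply]
  rw [Finset.sum_eq_zero]
  intro q _
  rcases eq_or_ne q (⟨⟨j, hj⟩, x⟩ : Fin m × β) with h | h
  · subst h
    by_cases hp : p = (⟨⟨j, hj⟩, x⟩ : Fin m × β)
    · subst hp; simp
    · simp [hp]
  · simp [h]

private theorem Q_succ (j : ℕ) (hj : j < m) :
    Qmat m β (j + 1) = Qmat m β j + (Pmat (β := β) ⟨j, hj⟩)ᵀ * Pmat (β := β) ⟨j, hj⟩ := by
  ext p q
  simp only [Qmat, Pmat, Matrix.add_apply, Matrix.mul_apply, Matrix.of_apply,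
    transpose_apply]
  have hsum : (∑ x : β, (if p = (⟨⟨j, hj⟩, x⟩ : Fin m × β) then (1:ℂ) else 0) *
      (if q = (⟨⟨j, hj⟩, x⟩ : Fin m × β) then (1:ℂ) else 0))
      = if p = q ∧ (p.1 : ℕ) = j then 1 else 0 := by
    rcases eq_or_ne p.1 (⟨j, hj⟩ : Fin m) with h1 | h1
    · rw [Finset.sum_eq_single p.2]
      · by_cases hpq : p = q
        · subst hpq
          simp [Prod.ext_iff, h1]
        · have : ¬ (q = (⟨⟨j,hj⟩, p.2⟩ : Fin m × β)) := by
            rintro rfl; exact hpq (Prod.ext h1 rfl)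
          simp [this, hpq, Prod.ext_iff, h1]
      · intro x _ hx
        have : ¬ (p = (⟨⟨j,hj⟩, x⟩ : Fin m × β)) := by
          rintro rfl; exact hx rfl
        simp [this]
      · intro h; exact absurd (Finset.mem_univ _) h
    · have h1' : (p.1 : ℕ) ≠ j := fun h => h1 (Fin.ext h)
      rw [Finset.sum_eq_zero]
      · simp [h1']
      · intro x _
        have : ¬ (p = (⟨⟨j,hj⟩, x⟩ : Fin m × β)) := by
          rintro rfl; exact h1 rfl
        simp [this]
  rw [hsum]
  by_cases hpq : p = q
  · subst hpq
    rcases Nat.lt_or_ge (p.1 : ℕ) j with h | h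
    · simp [Nat.lt_succ_of_lt h, h, Nat.ne_of_lt h]
    · rcases eq_or_ne (p.1 : ℕ) j with h2 | h2
      · simp [h2, Nat.lt_irrefl]
      · have : ¬ ((p.1 : ℕ) < j + 1) := by omega
        have h3 : ¬ ((p.1 : ℕ) < j) := by omega
        simp [this, h3, h2]
  · simp [hpq]

private theorem Q_zero : Qmat m β 0 = 0 := by
  ext p q; simp [Qmat]

private theorem Q_top : Qmat m β m = 1 := by
  ext p q
  simp [Qmat, Matrix.one_apply, p.1.isLt, and_comm]

end PQ

/-- The recursively constructed Green function (peeling off one boundary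
condition at a time) agrees with the closed-form one built from the inverse of
the full `m × m` boundary block matrix `𝔤`. -/
theorem green_function_recursion_agrees_with_closed_form
    {ι β : Type*} [Fintype ι] [Fintype β] [DecidableEq ι] [DecidableEq β]
    {m : ℕ}
    (r : Matrix β (ι ⊕ β) ℂ)
    (hr : ∀ (xb : β) (x : ι ⊕ β), r xb x = if x = Sum.inr xb then 1 else 0)
    (E : Matrix (ι ⊕ β) (ι ⊕ β) ℂ)
    (Ebar : Matrix β β ℂ) (hEbar : Ebar = r * E * rᴴ)
    (b a : Fin m → Matrix β β ℂ)
    (Gs : ℕ → Matrix (ι ⊕ β) (ι ⊕ β) ℂ)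
    (hGs0 : Gs 0 = E)
    (hinv : ∀ (j : ℕ) (hj : j < m),
      Invertible (b ⟨j, hj⟩ * r * Gs j * rᴴ * a ⟨j, hj⟩))
    (hstep : ∀ (j : ℕ) (hj : j < m),
      Gs (j + 1) = Gs j - Gs j * rᴴ * a ⟨j, hj⟩ *
        (b ⟨j, hj⟩ * r * Gs j * rᴴ * a ⟨j, hj⟩)⁻¹ * b ⟨j, hj⟩ * r * Gs j)
    (𝔤 : Matrix ((Fin m) × β) ((Fin m) × β) ℂ)
    (h𝔤 : ∀ (p q : (Fin m) × β), 𝔤 p q = (b p.1 * Ebar * a q.1) p.2 q.2)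
    (Bf : Matrix ((Fin m) × β) β ℂ)
    (hBf : ∀ (p : (Fin m) × β) (yb : β), Bf p yb = b p.1 p.2 yb)
    (Af : Matrix β ((Fin m) × β) ℂ)
    (hAf : ∀ (xb : β) (q : (Fin m) × β), Af xb q = a q.1 xb q.2)
    (h𝔤inv : Invertible 𝔤) :
    Gs m = E - E * rᴴ * Af * 𝔤⁻¹ * Bf * r * E := by
  have hb : ∀ j : Fin m, b j = Pmat (β := β) j * Bf := by
    intro j; ext x y
    simp only [Matrix.mul_apply, Pmat, Matrix.of_apply, ite_mul, one_mul, zero_mul]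
    rw [Finset.sum_ite_eq' Finset.univ ((j, x) : Fin m × β) (fun q => Bf q y)]
    simp [hBf]
  have ha : ∀ j : Fin m, a j = Af * (Pmat (β := β) j)ᵀ := by
    intro j; ext x y
    simp only [Matrix.mul_apply, Pmat, Matrix.of_apply, Matrix.transpose_apply,
      mul_ite, mul_one, mul_zero]
    rw [Finset.sum_ite_eq' Finset.univ ((j, y) : Fin m × β) (fun q => Af x q)]
    simp [hAf]
  have h1 : 𝔤 = Bf * Ebar * Af := by
    ext p q
    rw [h𝔤 p q]
    simp only [Matrix.mul_apply, hBf, hAf]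
  have h𝔤f : (Bf * r) * E * (rᴴ * Af) = 𝔤 := by
    rw [h1, hEbar]; simp only [Matrix.mul_assoc]
  have main : ∀ j : ℕ, j ≤ m → ∃ K : Matrix (Fin m × β) (Fin m × β) ℂ,
      Gs j = E - E * rᴴ * Af * K * Bf * r * E ∧
      K * Qmat m β j = K ∧ Qmat m β j * K = K ∧
      Qmat m β j * 𝔤 * K = Qmat m β j ∧ K * 𝔤 * Qmat m β j = Qmat m β j := by
    intro j
    induction j with
    | zero =>
      intro _
      refine ⟨0, ?_, ?_, ?_, ?_, ?_⟩
      · rw [hGs0]; simp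
      · simp
      · simp
      · rw [Q_zero]; simp
      · rw [Q_zero]; simp
    | succ j ih =>
      intro hjm
      have hj : j < m := Nat.lt_of_succ_le hjm
      obtain ⟨K, hG, h1', h2', h3', h4'⟩ := ih (Nat.le_of_lt hj)
      obtain ⟨g, hgdef⟩ : ∃ g, g = b ⟨j, hj⟩ * r * Gs j * rᴴ * a ⟨j, hj⟩ := ⟨_, rfl⟩
      haveI : Invertible g := hgdef ▸ hinv j hj
      have hg1 : g * g⁻¹ = 1 := Matrix.mul_inv_of_invertible g
      have hg2 : g⁻¹ * g = 1 := Matrix.inv_mul_of_invertible g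
      have hgval : g = Pmat (β := β) ⟨j, hj⟩ * (𝔤 * (Pmat (β := β) ⟨j, hj⟩)ᵀ) -
          Pmat (β := β) ⟨j, hj⟩ * (𝔤 * (K * (𝔤 * (Pmat (β := β) ⟨j, hj⟩)ᵀ))) := by
        rw [hgdef, hb ⟨j, hj⟩, ha ⟨j, hj⟩, hG, ← h𝔤f]
        simp only [Matrix.mul_sub, Matrix.sub_mul, Matrix.mul_assoc]
      obtain ⟨K', he, ha2, hb2, hc2, hd2⟩ :=
        core_step E (rᴴ * Af) (Bf * r) 𝔤 K (Qmat m β j) (Pmat ⟨j, hj⟩) g g⁻¹ h𝔤f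
          (Pmat_PPt _) (Pmat_Q j hj) (Q_Pt j hj) h1' h2' h3' h4' hgval hg1 hg2
      refine ⟨K', ?_, ?_, ?_, ?_, ?_⟩
      · have hst := hstep j hj
        rw [← hgdef] at hst
        rw [hst, hG, hb ⟨j, hj⟩, ha ⟨j, hj⟩]
        simpa only [Matrix.mul_assoc] using he
      · rw [Q_succ j hj]; exact ha2
      · rw [Q_succ j hj]; exact hb2
      · rw [Q_succ j hj]; exact hc2
      · rw [Q_succ j hj]; exact hd2
  obtain ⟨K, hG, -, -, h3, -⟩ := main m le_rfl
  rw [Q_top, Matrix.one_mul] at h3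
  have hK : 𝔤⁻¹ = K := Matrix.inv_eq_right_inv h3
  rw [hK]
  exact hG
end
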